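/- Let p be a prime, K a finite extension of ℚ_p with ring of integers 𝔬 and normalized additive valuation ord. Let B ∈ 𝓗_n(𝔬)^{nd}, let 1 ≤ r ≤ n, and let U ∈ GL_n(𝔬) and B' := ᵗU·B·U. Then min_{(𝐢,𝐣)∈𝓘_r×𝓘_r} ord(b^{(r)}_{𝐢,𝐣}(B)) = min_{(𝐢,𝐣)∈𝓘_r×𝓘_r} ord(b^{(r)}_{𝐢,𝐣}(B')); that is, the quantity g_r(B) := min_{(𝐢,𝐣)} ord(b^{(r)}_{𝐢,𝐣}(B)) is invariant under GL_n(𝔬)-equivalence. -/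

import Mathlib

open scoped Classical
open Matrix

/-- Strictly increasing sequences of length `r` with values in `Fin n`. -/
abbrev Inc (r n : ℕ) := {f : Fin r → Fin n // ∀ k l : Fin r, k < l → f k < f l}

/-- `ord(b^{(r)}_{i,j}(B))` where `b^{(r)}_{i,j}(B) = 2^(2⌊r/2⌋+1-δ_{i,j}) · det B(i;j)`. -/
noncomputable def bord {K : Type} [Field K] (v : AddValuation K (WithTop ℤ)) {n : ℕ} (r : ℕ)
    (B : Matrix (Fin n) (Fin n) K) (i j : Inc r n) : WithTop ℤ :=
  v ((2 : K) ^ (2 * (r / 2) + 1 - (if i = j then 1 else 0)) * (B.submatrix i.1 j.1).det)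

/-- `g_r(B)`, the minimum of `ord(b^{(r)}_{i,j}(B))` over all pairs `(i,j)`. -/
noncomputable def gmin {K : Type} [Field K] (v : AddValuation K (WithTop ℤ)) {n : ℕ} (r : ℕ)
    (B : Matrix (Fin n) (Fin n) K) : WithTop ℤ :=
  Finset.univ.inf fun q : Inc r n × Inc r n => bord v r B q.1 q.2

/-!
By Cauchy–Binet, the `r × r` minors of `ᵗU B U` are the entries of `ᵗC M C`, where `M` and `C` are
the `r`-th compound matrices of `B` and `U`; `M` is symmetric and `C` has integral entries.
`g_r(B)` is the least order of the entries of `2^{2⌊r/2⌋} M` once the off-diagonal ones are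
doubled, and this "half-integral order" of a symmetric matrix can only grow under `M ↦ ᵗC M C`:
off-diagonal entries of `ᵗC M C` are values of the bilinear form of `M`, and on the diagonal the
terms `(k, l)` and `(l, k)` of the quadratic form pair up into doubled terms.
Applying this to `U` and to `U⁻¹` gives the equality.
-/

open Finset Equiv

namespace Inc

variable {r n : ℕ}

lemma strictMono (f : Inc r n) : StrictMono f.1 := fun _ _ h => f.2 _ _ h

lemma comp_perm_injective :
    Function.Injective fun q : Inc r n × Perm (Fin r) => q.1.1 ∘ q.2 := by
  rintro ⟨f, σ⟩ ⟨g, τ⟩ h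
  have hfg : f = g := by
    refine Subtype.ext <| (f.strictMono.range_inj g.strictMono).mp ?_
    simpa only [Set.range_comp, σ.surjective.range_eq, τ.surjective.range_eq, Set.image_univ]
      using congrArg Set.range h
  subst hfg
  exact Prod.ext rfl <| Equiv.ext fun i => f.strictMono.injective (congrFun h i)

lemma exists_comp_perm_eq {p : Fin r → Fin n} (hp : Function.Injective p) :
    ∃ q : Inc r n × Perm (Fin r), q.1.1 ∘ q.2 = p := by
  have hsorted : StrictMono (p ∘ Tuple.sort p) :=
    (Tuple.monotone_sort p).strictMono_of_injective (hp.comp (Tuple.sort p).injective)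
  refine ⟨(⟨p ∘ Tuple.sort p, fun _ _ h => hsorted h⟩, (Tuple.sort p)⁻¹), ?_⟩
  funext i
  simp

lemma sum_eq_sum_comp_perm {M : Type*} [AddCommMonoid M] (g : (Fin r → Fin n) → M)
    (hg : ∀ p, ¬ Function.Injective p → g p = 0) :
    ∑ p, g p = ∑ f : Inc r n, ∑ σ : Perm (Fin r), g (f.1 ∘ σ) := by
  rw [← Fintype.sum_prod_type']
  refine (sum_of_injOn _ comp_perm_injective.injOn (fun _ _ => mem_univ _) ?_ fun _ _ => rfl).symm
  intro p _ hp
  refine hg p fun hinj => hp ?_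
  obtain ⟨q, hq⟩ := exists_comp_perm_eq hinj
  exact ⟨q, mem_coe.2 (mem_univ q), hq⟩

end Inc

namespace Matrix

variable {R : Type*} [CommRing R]

lemma det_mul_eq_sum_det_submatrix_mul {r n : ℕ} (A : Matrix (Fin r) (Fin n) R)
    (C : Matrix (Fin n) (Fin r) R) :
    (A * C).det = ∑ p : Fin r → Fin n, (∏ i, A i (p i)) * (C.submatrix p id).det := by
  let D : (Fin r → R) [⋀^Fin r]→ₗ[R] R := detRowAlternating
  calc (A * C).det = D fun i => ∑ k, A i k • C k := by
        congr 1; ext i j; simp [mul_apply, Finset.sum_apply]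
    _ = ∑ p : Fin r → Fin n, D fun i => A i (p i) • C (p i) := D.toMultilinearMap.map_sum _
    _ = _ := by
        simp only [D, AlternatingMap.map_smul_univ, smul_eq_mul]
        rfl

/-- The Cauchy–Binet formula. -/
theorem det_mul_eq_sum_inc {r n : ℕ} (A : Matrix (Fin r) (Fin n) R)
    (C : Matrix (Fin n) (Fin r) R) :
    (A * C).det = ∑ f : Inc r n, (A.submatrix id f.1).det * (C.submatrix f.1 id).det := by
  rw [det_mul_eq_sum_det_submatrix_mul, Inc.sum_eq_sum_comp_perm]
  · refine sum_congr rfl fun f _ => ?_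
    have hperm (σ : Perm (Fin r)) :
        (C.submatrix (f.1 ∘ σ) id).det = σ.sign * (C.submatrix f.1 id).det := by
      rw [← det_permute, submatrix_submatrix, Function.comp_id]
    simp_rw [hperm, ← det_transpose (A.submatrix id f.1), det_apply', sum_mul]
    refine sum_congr rfl fun σ _ => ?_
    simp only [transpose_apply, submatrix_apply, id, Function.comp_apply]
    ring
  · intro p hp
    obtain ⟨i, j, hij, hne⟩ : ∃ i j, p i = p j ∧ i ≠ j := by
      simpa [Function.Injective] using hp
    rw [det_zero_of_row_eq hne (funext fun k => by simp only [submatrix_apply, hij]), mul_zero]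

lemma IsSymm.transpose_mul_mul {ι κ : Type*} [Fintype ι] {A : Matrix ι ι R} (hA : A.IsSymm)
    (T : Matrix ι κ R) : (Tᵀ * A * T).IsSymm := by
  rw [IsSymm, transpose_mul, transpose_mul, hA.eq, transpose_transpose, Matrix.mul_assoc]

variable (r : ℕ) {m n p : ℕ}

def compound (A : Matrix (Fin m) (Fin n) R) : Matrix (Inc r m) (Inc r n) R :=
  of fun i j => (A.submatrix i.1 j.1).det

@[simp]
lemma compound_apply (A : Matrix (Fin m) (Fin n) R) (i : Inc r m) (j : Inc r n) :
    compound r A i j = (A.submatrix i.1 j.1).det :=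
  rfl

lemma compound_mul (A : Matrix (Fin m) (Fin n) R) (C : Matrix (Fin n) (Fin p) R) :
    compound r (A * C) = compound r A * compound r C := by
  ext i j
  rw [compound_apply, submatrix_mul _ _ i.1 id j.1 Function.bijective_id, det_mul_eq_sum_inc,
    mul_apply]
  simp only [submatrix_submatrix, Function.comp_id, Function.id_comp, compound_apply]

lemma compound_transpose (A : Matrix (Fin m) (Fin n) R) :
    compound r Aᵀ = (compound r A)ᵀ := by
  ext i j
  rw [compound_apply, ← transpose_submatrix, det_transpose, transpose_apply, compound_apply]

lemma IsSymm.compound {A : Matrix (Fin n) (Fin n) R} (hA : A.IsSymm) : (compound r A).IsSymm := by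
  rw [IsSymm, ← compound_transpose, hA.eq]

end Matrix

lemma Finset.sum_sum_eq_of_symm {ι R : Type*} [Fintype ι] [LinearOrder ι] [CommSemiring R]
    (f : ι → ι → R) (hf : ∀ i j, f i j = f j i) :
    ∑ i, ∑ j, f i j = ∑ i, f i i + ∑ i, ∑ j with i < j, 2 * f i j := by
  have hrow (i : ι) : ∑ j, f i j = f i i + ∑ j with j < i, f i j + ∑ j with i < j, f i j := by
    rw [sum_filter, sum_filter, ← Fintype.sum_ite_eq i (f i), ← sum_add_distrib, ← sum_add_distrib]
    refine sum_congr rfl fun j _ => ?_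
    rcases lt_trichotomy j i with h | rfl | h
    · simp [h.ne', h.not_gt, h.not_ge]
    · simp
    · simp [h.ne, h.not_gt, h.not_ge]
  have hswap : ∑ i, ∑ j with j < i, f i j = ∑ i, ∑ j with i < j, f i j := by
    simp_rw [sum_filter]
    rw [sum_comm]
    simp_rw [hf]
  simp only [hrow, sum_add_distrib, hswap, two_mul]
  ring

namespace AddValuation

open Matrix

variable {R Γ₀ : Type*} [CommRing R] [LinearOrderedAddCommMonoidWithTop Γ₀] (v : AddValuation R Γ₀)

lemma le_map_mul_mul {a x b : R} {m : Γ₀} (ha : 0 ≤ v a) (hx : m ≤ v x) (hb : 0 ≤ v b) :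
    m ≤ v (a * x * b) := by
  rw [v.map_mul, v.map_mul]
  exact le_add_of_le_of_nonneg (le_add_of_nonneg_of_le ha hx) hb

lemma nonneg_det {ι : Type*} [Fintype ι] [DecidableEq ι] {M : Matrix ι ι R}
    (hM : ∀ i j, 0 ≤ v (M i j)) : 0 ≤ v M.det := by
  rw [det_apply']
  refine v.map_le_sum fun σ _ => ?_
  have hsign : 0 ≤ v (Perm.sign σ : R) := by
    rcases Int.units_eq_one_or (Perm.sign σ) with h | h <;> simp [h, v.map_one, v.map_neg]
  rw [v.map_mul]
  exact add_nonneg hsign <|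
    prod_induction _ (fun x => 0 ≤ v x) (fun x y hx hy => v.map_mul x y ▸ add_nonneg hx hy)
      v.map_one.ge fun i _ => hM _ _

variable {ι : Type*} [Fintype ι] [DecidableEq ι]

/-- A symmetric `M` is half-integral exactly when `0 ≤ v.halfIntegralOrd M`. -/
def halfIntegralOrd (M : Matrix ι ι R) : Γ₀ :=
  univ.inf fun q : ι × ι => v ((if q.1 = q.2 then 1 else 2) * M q.1 q.2)

variable {v}

lemma le_halfIntegralOrd_iff {M : Matrix ι ι R} {m : Γ₀} :
    m ≤ v.halfIntegralOrd M ↔ (∀ i, m ≤ v (M i i)) ∧ ∀ i j, i ≠ j → m ≤ v (2 * M i j) := by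
  simp only [halfIntegralOrd, Finset.le_inf_iff, mem_univ, true_implies, Prod.forall]
  constructor
  · intro h
    exact ⟨fun i => by simpa using h i i, fun i j hij => by simpa [hij] using h i j⟩
  · rintro ⟨hdiag, hoff⟩ i j
    by_cases hij : i = j
    · subst hij; simpa using hdiag i
    · simpa [hij] using hoff i j hij

lemma le_map_two_mul_of_le_halfIntegralOrd (h2 : 0 ≤ v 2) {M : Matrix ι ι R} {m : Γ₀}
    (hm : m ≤ v.halfIntegralOrd M) (i j : ι) : m ≤ v (2 * M i j) := by
  obtain ⟨hdiag, hoff⟩ := le_halfIntegralOrd_iff.mp hm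
  by_cases hij : i = j
  · subst hij
    rw [v.map_mul]
    exact le_add_of_nonneg_of_le h2 (hdiag i)
  · exact hoff i j hij

lemma le_map_two_mul_dotProduct_mulVec (h2 : 0 ≤ v 2) {M : Matrix ι ι R} {m : Γ₀}
    (hm : m ≤ v.halfIntegralOrd M) {x y : ι → R} (hx : ∀ i, 0 ≤ v (x i)) (hy : ∀ i, 0 ≤ v (y i)) :
    m ≤ v (2 * (x ⬝ᵥ M *ᵥ y)) := by
  simp only [dotProduct, mulVec, mul_sum]
  refine v.map_le_sum fun i _ => v.map_le_sum fun j _ => ?_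
  rw [show 2 * (x i * (M i j * y j)) = x i * (2 * M i j) * y j by ring]
  exact v.le_map_mul_mul (hx i) (le_map_two_mul_of_le_halfIntegralOrd h2 hm i j) (hy j)

lemma le_map_dotProduct_mulVec_self {M : Matrix ι ι R} (hM : M.IsSymm) {m : Γ₀}
    (hm : m ≤ v.halfIntegralOrd M) {x : ι → R} (hx : ∀ i, 0 ≤ v (x i)) :
    m ≤ v (x ⬝ᵥ M *ᵥ x) := by
  let : LinearOrder ι := LinearOrder.lift' _ (Fintype.equivFin ι).injective
  have hquad : x ⬝ᵥ M *ᵥ x =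
      ∑ i, x i * M i i * x i + ∑ i, ∑ j with i < j, x i * (2 * M i j) * x j := by
    simp only [dotProduct, mulVec, mul_sum]
    rw [sum_sum_eq_of_symm _ fun i j => by rw [hM.apply i j]; ring]
    congr 1 <;> simp only [mul_left_comm _ (2 : R), mul_assoc]
  obtain ⟨hdiag, hoff⟩ := le_halfIntegralOrd_iff.mp hm
  rw [hquad]
  refine v.map_le_add (v.map_le_sum fun i _ => v.le_map_mul_mul (hx i) (hdiag i) (hx i)) ?_
  refine v.map_le_sum fun i _ => v.map_le_sum fun j hj => ?_
  exact v.le_map_mul_mul (hx i) (hoff i j (mem_filter.mp hj).2.ne) (hx j)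

lemma halfIntegralOrd_le_transpose_mul_mul (h2 : 0 ≤ v 2) {M : Matrix ι ι R} (hM : M.IsSymm)
    {κ : Type*} [Fintype κ] [DecidableEq κ] {T : Matrix ι κ R} (hT : ∀ i j, 0 ≤ v (T i j)) :
    v.halfIntegralOrd M ≤ v.halfIntegralOrd (Tᵀ * M * T) := by
  have hentry (a b : κ) : (Tᵀ * M * T) a b = (fun k => T k a) ⬝ᵥ M *ᵥ fun l => T l b := by
    simp only [mul_apply, transpose_apply, dotProduct, mulVec, sum_mul, mul_sum]
    rw [sum_comm]
    simp only [mul_assoc]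
  refine le_halfIntegralOrd_iff.mpr ⟨fun a => ?_, fun a b _ => ?_⟩
  · rw [hentry]
    exact le_map_dotProduct_mulVec_self hM le_rfl fun k => hT k a
  · rw [hentry]
    exact le_map_two_mul_dotProduct_mulVec h2 le_rfl (fun k => hT k a) fun l => hT l b

end AddValuation

section gmin

variable {K : Type} [Field K] (v : AddValuation K (WithTop ℤ)) {n : ℕ} (r : ℕ)

lemma gmin_eq_halfIntegralOrd (B : Matrix (Fin n) (Fin n) K) :
    gmin v r B = v.halfIntegralOrd ((2 : K) ^ (2 * (r / 2)) • B.compound r) := by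
  refine Finset.inf_congr rfl fun q _ => ?_
  simp only [bord, Matrix.smul_apply, Matrix.compound_apply, smul_eq_mul]
  split_ifs
  · rw [Nat.add_sub_cancel, one_mul]
  · rw [Nat.sub_zero, pow_succ, mul_comm _ (2 : K), mul_assoc]

lemma gmin_le_gmin_transpose_mul_mul (h2 : 0 ≤ v 2) {B : Matrix (Fin n) (Fin n) K}
    (hB : B.IsSymm) {U : Matrix (Fin n) (Fin n) K} (hU : ∀ i j, 0 ≤ v (U i j)) :
    gmin v r B ≤ gmin v r (Uᵀ * B * U) := by
  rw [gmin_eq_halfIntegralOrd, gmin_eq_halfIntegralOrd, Matrix.compound_mul, Matrix.compound_mul,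
    Matrix.compound_transpose, ← Matrix.smul_mul, ← Matrix.mul_smul]
  exact v.halfIntegralOrd_le_transpose_mul_mul h2 ((hB.compound r).smul _)
    fun i j => v.nonneg_det fun k l => hU _ _

end gmin

theorem statement2_general (p : ℕ) [Fact (Nat.Prime p)]
    (K : Type) [Field K] [Algebra ℤ_[p] K]
    -- `v` is the additive valuation on `K`, normalized so that `v π = 1`,
    -- whose valuation ring is the ring of integers (= integral closure of ℤ_p) of `K`
    (v : AddValuation K (WithTop ℤ))
    (hvint : ∀ x : K, 0 ≤ v x ↔ IsIntegral ℤ_[p] x)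
    (n r : ℕ)
    -- B is a nondegenerate half-integral symmetric matrix over the ring of integers
    (B : Matrix (Fin n) (Fin n) K) (hsymm : B.IsSymm)
    -- U ∈ GL_n(𝔬)
    (U : Matrix (Fin n) (Fin n) K)
    (hU : ∀ i j, 0 ≤ v (U i j))
    (hUinv : ∃ W : Matrix (Fin n) (Fin n) K,
      (∀ i j, 0 ≤ v (W i j)) ∧ U * W = 1 ∧ W * U = 1) :
    gmin v r B = gmin v r (Uᵀ * B * U) := by
  obtain ⟨W, hW, hUW, -⟩ := hUinv
  have h2 : 0 ≤ v 2 := (hvint 2).mpr <| by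
    simpa only [map_ofNat] using isIntegral_algebraMap (R := ℤ_[p]) (A := K) (x := 2)
  have hback : Wᵀ * (Uᵀ * B * U) * W = B := by
    rw [← Matrix.mul_assoc, ← Matrix.mul_assoc, ← Matrix.transpose_mul, hUW, Matrix.transpose_one,
      Matrix.one_mul, Matrix.mul_assoc, hUW, Matrix.mul_one]
  refine le_antisymm (gmin_le_gmin_transpose_mul_mul v r h2 hsymm hU) ?_
  simpa only [hback] using gmin_le_gmin_transpose_mul_mul v r h2 (hsymm.transpose_mul_mul U) hW

theorem statement2 (p : ℕ) [Fact (Nat.Prime p)]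
    (K : Type) [Field K] [Algebra ℚ_[p] K] [FiniteDimensional ℚ_[p] K]
    [Algebra ℤ_[p] K] [IsScalarTower ℤ_[p] ℚ_[p] K]
    -- `v` is the additive valuation on `K`, normalized so that `v π = 1`,
    -- whose valuation ring is the ring of integers (= integral closure of ℤ_p) of `K`
    (v : AddValuation K (WithTop ℤ))
    (hv0 : ∀ x : K, v x = ⊤ ↔ x = 0)
    (hvint : ∀ x : K, 0 ≤ v x ↔ IsIntegral ℤ_[p] x)
    (hvnorm : ∃ π : K, v π = 1)
    (n r : ℕ) (hr1 : 1 ≤ r) (hrn : r ≤ n)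
    -- B is a nondegenerate half-integral symmetric matrix over the ring of integers
    (B : Matrix (Fin n) (Fin n) K) (hsymm : B.IsSymm)
    (hdiag : ∀ i, 0 ≤ v (B i i))
    (hoff : ∀ i j, i ≠ j → 0 ≤ v (2 * B i j))
    (hnd : B.det ≠ 0)
    -- U ∈ GL_n(𝔬)
    (U : Matrix (Fin n) (Fin n) K)
    (hU : ∀ i j, 0 ≤ v (U i j))
    (hUinv : ∃ W : Matrix (Fin n) (Fin n) K,
      (∀ i j, 0 ≤ v (W i j)) ∧ U * W = 1 ∧ W * U = 1) :
    gmin v r B = gmin v r (Uᵀ * B * U) :=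
  statement2_general p K v hvint n r B hsymm U hU hUinv
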